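/- Let G_n = (-L_n^2 + (2n+5)L_n - 2n - 4) / (2(n+3)(n+2)) with L_n = 3 + Binomial(n-1,p), 0 < p < 1. Then E[G_n] → p(2-p)/2 as n → ∞, and moreover G_n → p(2-p)/2 in probability and in L^r for every r > 0. -/

import Mathlib

open Filter MeasureTheory Asymptotics Topology

/-- Expectation of `f` under a Binomial(m, p) distribution, as a finite sum. -/
noncomputable def binExp (m : ℕ) (p : ℝ) (f : ℕ → ℝ) : ℝ :=
  ∑ k ∈ Finset.range (m+1), (m.choose k : ℝ) * p^k * (1-p)^(m-k) * f k

/-- Variance of `f` under a Binomial(m, p) distribution. -/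
noncomputable def binVar (m : ℕ) (p : ℝ) (f : ℕ → ℝ) : ℝ :=
  binExp m p (fun k => (f k - binExp m p f)^2)

/-- The degree-based Gini index of a random spider tree at time n. -/
noncomputable def giniF : ℕ → ℕ → ℝ :=
  (fun (n : ℕ) (k : ℕ) => (-(((k : ℝ) + 3) ^ 2) + (2*(n : ℝ)+5)*((k : ℝ)+3) - 2*(n : ℝ) - 4) / (2*((n : ℝ)+3)*((n : ℝ)+2)))

/-!
Write `K ~ Bin(m, p)` and `d = K - m p`. The numerator of `G_{m+1} - p(2-p)/2` is a quadratic
in `d` with coefficients of order `m`, while the denominator is of order `m²`; since `|d| ≤ m`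
this gives `(m+1) |G_{m+1} - p(2-p)/2| ≤ 2|d| + 4`. Hence `|G - p(2-p)/2| ≤ 4` and
`E (G - p(2-p)/2)² = O(Var K / m²) = O(1/m)`. Chebyshev's inequality gives convergence in
probability, boundedness upgrades it to convergence in `L^r` for every `r > 0`, and the case
`r = 1` gives convergence of the mean.
-/

lemma binExp_eq_sum_bernsteinPolynomial (m : ℕ) (p : ℝ) (f : ℕ → ℝ) :
    binExp m p f = ∑ k ∈ Finset.range (m + 1), (bernsteinPolynomial ℝ m k).eval p * f k := by
  simp [binExp, bernsteinPolynomial]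

lemma binExp_const (m : ℕ) (p c : ℝ) : binExp m p (fun _ => c) = c := by
  rw [binExp_eq_sum_bernsteinPolynomial, ← Finset.sum_mul, ← Polynomial.eval_finsetSum,
    bernsteinPolynomial.sum, Polynomial.eval_one, one_mul]

lemma binExp_add (m : ℕ) (p : ℝ) (f g : ℕ → ℝ) :
    binExp m p (fun k => f k + g k) = binExp m p f + binExp m p g := by
  simp only [binExp, mul_add, Finset.sum_add_distrib]

lemma binExp_sub (m : ℕ) (p : ℝ) (f g : ℕ → ℝ) :
    binExp m p (fun k => f k - g k) = binExp m p f - binExp m p g := by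
  simp only [binExp, mul_sub, Finset.sum_sub_distrib]

lemma binExp_const_mul (m : ℕ) (p c : ℝ) (f : ℕ → ℝ) :
    binExp m p (fun k => c * f k) = c * binExp m p f := by
  simp only [binExp, Finset.mul_sum]
  exact Finset.sum_congr rfl fun _ _ => by ring

lemma binExp_sq_sub_mul (m : ℕ) (p : ℝ) :
    binExp m p (fun k => ((k : ℝ) - m * p) ^ 2) = m * p * (1 - p) := by
  have h := congrArg (Polynomial.eval p) (bernsteinPolynomial.variance (R := ℝ) m)
  simp only [Polynomial.eval_finsetSum, Polynomial.eval_mul, Polynomial.eval_pow,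
    Polynomial.eval_sub, Polynomial.eval_X, Polynomial.eval_natCast,
    Polynomial.eval_one, nsmul_eq_mul] at h
  rw [binExp_eq_sum_bernsteinPolynomial, ← h]
  exact Finset.sum_congr rfl fun _ _ => by ring

section

variable {m : ℕ} {p : ℝ}

lemma bernstein_weight_nonneg (hp0 : 0 ≤ p) (hp1 : p ≤ 1) (k : ℕ) :
    0 ≤ (m.choose k : ℝ) * p ^ k * (1 - p) ^ (m - k) := by
  have : 0 ≤ 1 - p := by linarith
  positivity

lemma binExp_mono (hp0 : 0 ≤ p) (hp1 : p ≤ 1) {f g : ℕ → ℝ} (h : ∀ k ≤ m, f k ≤ g k) :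
    binExp m p f ≤ binExp m p g :=
  Finset.sum_le_sum fun k hk => mul_le_mul_of_nonneg_left
    (h k (Nat.lt_succ_iff.mp (Finset.mem_range.mp hk))) (bernstein_weight_nonneg hp0 hp1 k)

lemma binExp_nonneg (hp0 : 0 ≤ p) (hp1 : p ≤ 1) {f : ℕ → ℝ} (h : ∀ k ≤ m, 0 ≤ f k) :
    0 ≤ binExp m p f := by
  simpa only [binExp_const] using binExp_mono hp0 hp1 (f := fun _ => 0) h

lemma abs_binExp_le (hp0 : 0 ≤ p) (hp1 : p ≤ 1) (f : ℕ → ℝ) :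
    |binExp m p f| ≤ binExp m p (fun k => |f k|) := by
  refine (Finset.abs_sum_le_sum_abs _ _).trans_eq (Finset.sum_congr rfl fun k _ => ?_)
  rw [abs_mul, abs_of_nonneg (bernstein_weight_nonneg hp0 hp1 k)]

end

section

variable {ι : Type*} {l : Filter ι} {m : ι → ℕ} {p : ℝ}

lemma tendsto_binExp_indicator_of_tendsto_sq (hp0 : 0 ≤ p) (hp1 : p ≤ 1) {Y : ι → ℕ → ℝ}
    (hY : Tendsto (fun i => binExp (m i) p (fun k => Y i k ^ 2)) l (𝓝 0)) {ε : ℝ} (hε : 0 < ε) :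
    Tendsto (fun i => binExp (m i) p (fun k => if ε ≤ |Y i k| then 1 else 0)) l (𝓝 0) := by
  have hmarkov : ∀ y : ℝ, (if ε ≤ |y| then (1 : ℝ) else 0) ≤ (ε ^ 2)⁻¹ * y ^ 2 := by
    intro y
    split_ifs with hy
    · rw [← sq_abs y, ← div_eq_inv_mul, one_le_div (by positivity)]
      exact pow_le_pow_left₀ hε.le hy 2
    · positivity
  refine squeeze_zero (fun i => binExp_nonneg hp0 hp1 fun k _ => by positivity)
    (fun i => (binExp_mono hp0 hp1 fun k _ => hmarkov (Y i k)).trans_eq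
      (binExp_const_mul _ _ _ _)) ?_
  simpa using hY.const_mul (ε ^ 2)⁻¹

lemma tendsto_binExp_rpow_of_bounded (hp0 : 0 ≤ p) (hp1 : p ≤ 1) {Y : ι → ℕ → ℝ} {C : ℝ}
    (hC : ∀ i, ∀ k ≤ m i, |Y i k| ≤ C)
    (hY : ∀ ε > 0, Tendsto (fun i => binExp (m i) p (fun k => if ε ≤ |Y i k| then 1 else 0))
      l (𝓝 0))
    {r : ℝ} (hr : 0 < r) :
    Tendsto (fun i => binExp (m i) p (fun k => |Y i k| ^ r)) l (𝓝 0) := by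
  refine tendsto_order.2 ⟨fun a ha => Eventually.of_forall fun i =>
    ha.trans_le (binExp_nonneg hp0 hp1 fun k _ => by positivity), fun δ hδ => ?_⟩
  set ε := (δ / 2) ^ r⁻¹
  have hε : 0 < ε := by positivity
  have hsplit : ∀ i, ∀ k ≤ m i,
      |Y i k| ^ r ≤ δ / 2 + C ^ r * (if ε ≤ |Y i k| then 1 else 0) := by
    intro i k hk
    split_ifs with hy
    · have := Real.rpow_le_rpow (abs_nonneg _) (hC i k hk) hr.le
      linarith
    · calc |Y i k| ^ r ≤ ε ^ r := Real.rpow_le_rpow (abs_nonneg _) (not_le.mp hy).le hr.le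
        _ = δ / 2 + C ^ r * 0 := by
          rw [Real.rpow_inv_rpow (by positivity) hr.ne', mul_zero, add_zero]
  have hsmall := (hY ε hε).const_mul (C ^ r)
  rw [mul_zero] at hsmall
  filter_upwards [hsmall.eventually (gt_mem_nhds (half_pos hδ))] with i hi
  calc binExp (m i) p (fun k => |Y i k| ^ r)
      ≤ binExp (m i) p (fun k => δ / 2 + C ^ r * (if ε ≤ |Y i k| then 1 else 0)) :=
        binExp_mono hp0 hp1 (hsplit i)
    _ = δ / 2 + C ^ r * binExp (m i) p (fun k => if ε ≤ |Y i k| then 1 else 0) := by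
        rw [binExp_add, binExp_const, binExp_const_mul]
    _ < δ := by linarith

lemma tendsto_binExp_of_tendsto_abs_sub (hp0 : 0 ≤ p) (hp1 : p ≤ 1) {f : ι → ℕ → ℝ} {c : ℝ}
    (hf : Tendsto (fun i => binExp (m i) p (fun k => |f i k - c|)) l (𝓝 0)) :
    Tendsto (fun i => binExp (m i) p (f i)) l (𝓝 c) := by
  refine tendsto_iff_norm_sub_tendsto_zero.2 (squeeze_zero (fun _ => norm_nonneg _)
    (fun i => ?_) hf)
  have h := abs_binExp_le hp0 hp1 (m := m i) (fun k => f i k - c)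
  rwa [binExp_sub, binExp_const, ← Real.norm_eq_abs] at h

end

lemma abs_natCast_sub_mul_le {m k : ℕ} (hk : k ≤ m) {p : ℝ} (hp0 : 0 ≤ p) (hp1 : p ≤ 1) :
    |(k : ℝ) - m * p| ≤ m := by
  have hk' : (k : ℝ) ≤ m := by exact_mod_cast hk
  have hmp : (m : ℝ) * p ≤ m := mul_le_of_le_one_right (by positivity) hp1
  exact abs_le.2 ⟨by nlinarith, by nlinarith⟩

lemma mul_abs_giniF_sub_le {m k : ℕ} (hk : k ≤ m) {p : ℝ} (hp0 : 0 ≤ p) (hp1 : p ≤ 1) :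
    ((m : ℝ) + 1) * |giniF (m + 1) k - p * (2 - p) / 2| ≤ 2 * |(k : ℝ) - m * p| + 4 := by
  set d := (k : ℝ) - m * p
  have hden : (0 : ℝ) < 2 * ((m + 1) + 3) * ((m + 1) + 2) := by positivity
  have hG : giniF (m + 1) k - p * (2 - p) / 2 =
      (-d ^ 2 + (2 * m + 1 - 2 * m * p) * d
        + ((7 * p ^ 2 - 13 * p + 4) * m + (12 * p ^ 2 - 24 * p + 6)))
        / (2 * ((m + 1) + 3) * ((m + 1) + 2)) := by
    simp only [giniF, d]
    push_cast
    field_simp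
    ring
  have hd : |d| ≤ m := abs_natCast_sub_mul_le hk hp0 hp1
  have hB : |(2 * m + 1 - 2 * m * p : ℝ)| ≤ 2 * m + 1 := abs_le.2 ⟨by nlinarith, by nlinarith⟩
  have hD : |(7 * p ^ 2 - 13 * p + 4) * m + (12 * p ^ 2 - 24 * p + 6)| ≤ 4 * (m : ℝ) + 6 := by
    have h1 : |7 * p ^ 2 - 13 * p + 4| ≤ 4 := abs_le.2 ⟨by nlinarith, by nlinarith⟩
    have h2 : |12 * p ^ 2 - 24 * p + 6| ≤ 6 := abs_le.2 ⟨by nlinarith, by nlinarith⟩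
    calc _ ≤ |7 * p ^ 2 - 13 * p + 4| * (m : ℝ) + |12 * p ^ 2 - 24 * p + 6| := by
          grw [abs_add_le, abs_mul, Nat.abs_cast]
      _ ≤ 4 * (m : ℝ) + 6 := by gcongr
  have hnum : |-d ^ 2 + (2 * m + 1 - 2 * m * p) * d
      + ((7 * p ^ 2 - 13 * p + 4) * m + (12 * p ^ 2 - 24 * p + 6))|
        ≤ 3 * ((m : ℝ) + 1) * |d| + 6 * ((m : ℝ) + 1) := by
    calc _ ≤ |d| ^ 2 + |(2 * m + 1 - 2 * m * p : ℝ)| * |d|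
          + |(7 * p ^ 2 - 13 * p + 4) * m + (12 * p ^ 2 - 24 * p + 6)| := by
          grw [abs_add_le, abs_add_le, abs_neg, abs_mul, abs_pow]
      _ ≤ _ := by
          nlinarith [mul_le_mul_of_nonneg_right hB (abs_nonneg d),
            mul_le_mul_of_nonneg_right hd (abs_nonneg d)]
  rw [hG, abs_div, abs_of_pos hden, mul_div_assoc', div_le_iff₀ hden]
  nlinarith [abs_nonneg d]

lemma abs_giniF_sub_le {m k : ℕ} (hk : k ≤ m) {p : ℝ} (hp0 : 0 ≤ p) (hp1 : p ≤ 1) :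
    |giniF (m + 1) k - p * (2 - p) / 2| ≤ 4 := by
  have h := mul_abs_giniF_sub_le hk hp0 hp1
  have hd := abs_natCast_sub_mul_le hk hp0 hp1
  nlinarith [abs_nonneg (giniF (m + 1) k - p * (2 - p) / 2)]

lemma tendsto_binExp_sq_giniF_sub {p : ℝ} (hp0 : 0 ≤ p) (hp1 : p ≤ 1) :
    Tendsto (fun m : ℕ => binExp m p (fun k => (giniF (m + 1) k - p * (2 - p) / 2) ^ 2))
      atTop (𝓝 0) := by
  have hpoint : ∀ m k : ℕ, k ≤ m → (giniF (m + 1) k - p * (2 - p) / 2) ^ 2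
      ≤ (((m : ℝ) + 1) ^ 2)⁻¹ * (8 * ((k : ℝ) - m * p) ^ 2 + 32) := by
    intro m k hk
    rw [← div_eq_inv_mul, le_div_iff₀ (by positivity), mul_comm]
    calc ((m : ℝ) + 1) ^ 2 * (giniF (m + 1) k - p * (2 - p) / 2) ^ 2
        = (((m : ℝ) + 1) * |giniF (m + 1) k - p * (2 - p) / 2|) ^ 2 := by rw [mul_pow, sq_abs]
      _ ≤ (2 * |(k : ℝ) - m * p| + 4) ^ 2 :=
          pow_le_pow_left₀ (by positivity) (mul_abs_giniF_sub_le hk hp0 hp1) 2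
      _ ≤ 8 * ((k : ℝ) - m * p) ^ 2 + 32 := by
          nlinarith [sq_abs ((k : ℝ) - m * p), sq_nonneg (|(k : ℝ) - m * p| - 2)]
  have hmean : ∀ m : ℕ, binExp m p (fun k => (giniF (m + 1) k - p * (2 - p) / 2) ^ 2)
      ≤ 40 * (1 / ((m : ℝ) + 1)) := by
    intro m
    calc _ ≤ binExp m p (fun k => (((m : ℝ) + 1) ^ 2)⁻¹ * (8 * ((k : ℝ) - m * p) ^ 2 + 32)) :=
          binExp_mono hp0 hp1 (hpoint m)
      _ = (((m : ℝ) + 1) ^ 2)⁻¹ * (8 * (m * p * (1 - p)) + 32) := by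
          rw [binExp_const_mul, binExp_add, binExp_const_mul, binExp_sq_sub_mul, binExp_const]
      _ ≤ _ := by
          rw [← div_eq_inv_mul, div_le_iff₀ (by positivity)]
          field_simp
          nlinarith [mul_le_mul_of_nonneg_left (show p * (1 - p) ≤ 1 by nlinarith)
            (Nat.cast_nonneg (α := ℝ) m)]
  refine squeeze_zero (fun m => binExp_nonneg hp0 hp1 fun k _ => sq_nonneg _) hmean ?_
  simpa using tendsto_one_div_add_atTop_nhds_zero_nat.const_mul (40 : ℝ)

/-- E[G_n] → p(2-p)/2, and G_n → p(2-p)/2 in probability and in L^r for every r > 0. -/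
theorem stmt18 (p : ℝ) (hp0 : 0 < p) (hp1 : p < 1) :
    Filter.Tendsto (fun n : ℕ => binExp (n-1) p (giniF n))
      Filter.atTop (𝓝 (p*(2-p)/2)) ∧
    (∀ ε : ℝ, 0 < ε → Filter.Tendsto (fun n : ℕ =>
      binExp (n-1) p (fun k => if ε ≤ |giniF n k - p*(2-p)/2| then (1 : ℝ) else 0))
      Filter.atTop (𝓝 0)) ∧
    (∀ r : ℝ, 0 < r → Filter.Tendsto (fun n : ℕ =>
      binExp (n-1) p (fun k => |giniF n k - p*(2-p)/2| ^ r))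
      Filter.atTop (𝓝 0)) := by
  simp_rw [← tendsto_add_atTop_iff_nat (f := fun n => binExp (n - 1) p _) 1, Nat.add_sub_cancel]
  have hprob : ∀ ε : ℝ, 0 < ε → Tendsto (fun m : ℕ =>
      binExp m p (fun k => if ε ≤ |giniF (m + 1) k - p * (2 - p) / 2| then (1 : ℝ) else 0))
      atTop (𝓝 0) := fun ε hε =>
    tendsto_binExp_indicator_of_tendsto_sq hp0.le hp1.le
      (tendsto_binExp_sq_giniF_sub hp0.le hp1.le) hε
  have hLr : ∀ r : ℝ, 0 < r → Tendsto (fun m : ℕ =>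
      binExp m p (fun k => |giniF (m + 1) k - p * (2 - p) / 2| ^ r)) atTop (𝓝 0) := fun r hr =>
    tendsto_binExp_rpow_of_bounded hp0.le hp1.le
      (fun _ _ hk => abs_giniF_sub_le hk hp0.le hp1.le) hprob hr
  refine ⟨tendsto_binExp_of_tendsto_abs_sub hp0.le hp1.le ?_, hprob, hLr⟩
  simpa only [Real.rpow_one] using hLr 1 one_pos
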